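/- arXiv:1210.5990 — 6 statements merged into one kernel-verified Lean document; each statement's English description precedes it below -/
import Mathlib

section
/- Let ρ₁ be Lebesgue measure on (0,∞) and ρ₂ the measure e^{-s} ds on (0,∞). Then the pushforward of the product measure ρ₁ × ρ₂ under the map (t,s) ↦ e^{-t}·s is the measure with density w ↦ e^{-w}/w with respect to Lebesgue measure on (0,∞). Equivalently, for every bounded measurable nonnegative g: ∫₀^∞∫₀^∞ g(e^{-t} s) e^{-s} dt ds = ∫₀^∞ g(w) (e^{-w}/w) dw. -/
open MeasureTheory Set Real
open scoped ENNReal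

/-- 1D change of variables for lintegral. -/
lemma lintegral_image_1d {s : Set ℝ} {f f' : ℝ → ℝ} (hs : MeasurableSet s)
    (hf' : ∀ x ∈ s, HasDerivWithinAt f (f' x) s x) (hf : InjOn f s) (g : ℝ → ℝ≥0∞) :
    ∫⁻ x in f '' s, g x = ∫⁻ x in s, ENNReal.ofReal |f' x| * g (f x) := by
  simpa only [ContinuousLinearMap.det_toSpanSingleton] using
    lintegral_image_eq_lintegral_abs_det_fderiv_mul volume hs
      (fun x hx => (hf' x hx).hasFDerivWithinAt) hf g

lemma image_exp_neg_mul (s : ℝ) (hs : 0 < s) :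
    (fun t => Real.exp (-t) * s) '' Ioi (0:ℝ) = Ioo 0 s := by
  ext w
  constructor
  · rintro ⟨t, ht, rfl⟩
    have h1 : Real.exp (-t) < 1 := by
      rw [Real.exp_lt_one_iff]; linarith [mem_Ioi.1 ht]
    exact ⟨mul_pos (Real.exp_pos _) hs, mul_lt_of_lt_one_left hs h1⟩
  · rintro ⟨hw0, hws⟩
    refine ⟨Real.log (s / w), ?_, ?_⟩
    · exact mem_Ioi.2 (Real.log_pos ((one_lt_div hw0).2 hws))
    · show Real.exp (-Real.log (s / w)) * s = w
      rw [Real.exp_neg, Real.exp_log (by positivity)]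
      field_simp

lemma key_subst {A : Set ℝ} (hA : MeasurableSet A) {s : ℝ} (hs : 0 < s) :
    ∫⁻ t in Ioi (0:ℝ), A.indicator (1 : ℝ → ℝ≥0∞) (Real.exp (-t) * s) =
      ∫⁻ w in Ioo (0:ℝ) s, A.indicator (1 : ℝ → ℝ≥0∞) w * (ENNReal.ofReal w)⁻¹ := by
  have hder : ∀ t ∈ Ioi (0:ℝ), HasDerivWithinAt (fun t => Real.exp (-t) * s)
      (-(Real.exp (-t) * s)) (Ioi 0) t := by
    intro t _
    have h := ((Real.hasDerivAt_exp (-t)).comp t (hasDerivAt_neg t)).mul_const s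
    exact h.hasDerivWithinAt.congr_deriv (by ring)
  have hinj : InjOn (fun t => Real.exp (-t) * s) (Ioi 0) := by
    have h2 : StrictAntiOn (fun t => Real.exp (-t) * s) (Ioi 0) := by
      intro a _ b _ hab
      exact mul_lt_mul_of_pos_right (Real.exp_lt_exp.2 (by linarith)) hs
    exact h2.injOn
  rw [← image_exp_neg_mul s hs,
    lintegral_image_1d measurableSet_Ioi hder hinj
      (fun w => A.indicator (1 : ℝ → ℝ≥0∞) w * (ENNReal.ofReal w)⁻¹)]
  refine setLIntegral_congr_fun measurableSet_Ioi ?_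
  intro t ht
  have hpos : 0 < Real.exp (-t) * s := mul_pos (Real.exp_pos _) hs
  have hne : ENNReal.ofReal (Real.exp (-t) * s) ≠ 0 := by
    simp [ENNReal.ofReal_eq_zero, not_le, hpos]
  beta_reduce
  rw [abs_neg, abs_of_pos hpos, ← mul_assoc, mul_comm (ENNReal.ofReal _),
    mul_assoc, ENNReal.mul_inv_cancel hne ENNReal.ofReal_ne_top, mul_one]

lemma tail_exp {w : ℝ} :
    ∫⁻ s in Ioi w, ENNReal.ofReal (Real.exp (-s)) = ENNReal.ofReal (Real.exp (-w)) := by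
  have hint : IntegrableOn (fun s => Real.exp (-s)) (Ioi w) := by
    simpa using exp_neg_integrableOn_Ioi w one_pos
  rw [← ofReal_integral_eq_lintegral_ofReal hint
      (Filter.Eventually.of_forall fun x => (Real.exp_pos _).le),
    integral_exp_neg_Ioi]

theorem stmt1 :
    Measure.map (fun p : ℝ × ℝ => Real.exp (-p.1) * p.2)
      ((volume.restrict (Set.Ioi (0:ℝ))).prod
        ((volume.restrict (Set.Ioi (0:ℝ))).withDensity
          (fun s => ENNReal.ofReal (Real.exp (-s))))) =
    (volume.restrict (Set.Ioi (0:ℝ))).withDensity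
      (fun w => ENNReal.ofReal (Real.exp (-w) / w)) := by
  have hmap : Measurable (fun p : ℝ × ℝ => Real.exp (-p.1) * p.2) :=
    ((Real.measurable_exp.comp measurable_fst.neg).mul measurable_snd)
  refine Measure.ext fun A hA => ?_
  set I : ℝ → ℝ≥0∞ := A.indicator (1 : ℝ → ℝ≥0∞) with hIdef
  have hImeas : Measurable I := measurable_const.indicator hA
  set ρ : ℝ → ℝ≥0∞ := fun s => ENNReal.ofReal (Real.exp (-s)) with hρdef
  have hρmeas : Measurable ρ := (Real.measurable_exp.comp measurable_neg).ennreal_ofReal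
  set h : ℝ → ℝ≥0∞ := fun w => I w * (ENNReal.ofReal w)⁻¹ with hhdef
  have hhmeas : Measurable h := hImeas.mul (measurable_id.ennreal_ofReal.inv)
  -- sections
  have hsec : ∀ t : ℝ,
      ((volume.restrict (Set.Ioi (0:ℝ))).withDensity ρ)
        (Prod.mk t ⁻¹' ((fun p : ℝ × ℝ => Real.exp (-p.1) * p.2) ⁻¹' A)) =
      ∫⁻ s in Ioi (0:ℝ), I (Real.exp (-t) * s) * ρ s := by
    intro t
    have hBt : MeasurableSet {s : ℝ | Real.exp (-t) * s ∈ A} :=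
      hA.preimage (measurable_const.mul measurable_id)
    have : Prod.mk t ⁻¹' ((fun p : ℝ × ℝ => Real.exp (-p.1) * p.2) ⁻¹' A) =
        {s : ℝ | Real.exp (-t) * s ∈ A} := rfl
    rw [this, withDensity_apply _ hBt, ← lintegral_indicator hBt]
    refine lintegral_congr fun s => ?_
    simp only [Set.indicator_apply, hIdef, Set.mem_setOf_eq]
    by_cases hx : Real.exp (-t) * s ∈ A <;> simp [hx]
  rw [Measure.map_apply hmap hA, Measure.prod_apply (hmap hA)]
  calc
    ∫⁻ t in Ioi (0:ℝ), ((volume.restrict (Set.Ioi (0:ℝ))).withDensity ρ)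
        (Prod.mk t ⁻¹' ((fun p : ℝ × ℝ => Real.exp (-p.1) * p.2) ⁻¹' A))
      = ∫⁻ t in Ioi (0:ℝ), ∫⁻ s in Ioi (0:ℝ), I (Real.exp (-t) * s) * ρ s :=
        lintegral_congr hsec
    _ = ∫⁻ s in Ioi (0:ℝ), ∫⁻ t in Ioi (0:ℝ), I (Real.exp (-t) * s) * ρ s := by
        refine lintegral_lintegral_swap ?_
        exact ((hImeas.comp hmap).mul (hρmeas.comp measurable_snd)).aemeasurable
    _ = ∫⁻ s in Ioi (0:ℝ), (∫⁻ t in Ioi (0:ℝ), I (Real.exp (-t) * s)) * ρ s := by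
        refine lintegral_congr fun s => ?_
        exact lintegral_mul_const _ (hImeas.comp (measurable_neg.exp.mul_const s))
    _ = ∫⁻ s in Ioi (0:ℝ), (∫⁻ w in Ioo (0:ℝ) s, h w) * ρ s := by
        refine setLIntegral_congr_fun measurableSet_Ioi ?_
        intro s hs
        beta_reduce
        rw [key_subst hA hs]
    _ = ∫⁻ s in Ioi (0:ℝ), ∫⁻ w, (Ioo (0:ℝ) s).indicator h w * ρ s := by
        refine lintegral_congr fun s => ?_
        rw [← lintegral_indicator measurableSet_Ioo,
          lintegral_mul_const _ (hhmeas.indicator measurableSet_Ioo)]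
    _ = ∫⁻ w, ∫⁻ s in Ioi (0:ℝ), (Ioo (0:ℝ) s).indicator h w * ρ s := by
        refine lintegral_lintegral_swap ?_
        have hset : MeasurableSet {q : ℝ × ℝ | 0 < q.2 ∧ q.2 < q.1} :=
          (measurableSet_lt measurable_const measurable_snd).inter
            (measurableSet_lt measurable_snd measurable_fst)
        have heq : (fun q : ℝ × ℝ => (Ioo (0:ℝ) q.1).indicator h q.2 * ρ q.1) =
            fun q : ℝ × ℝ =>
              ({q : ℝ × ℝ | 0 < q.2 ∧ q.2 < q.1}.indicator (fun q => h q.2) q) * ρ q.1 := by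
          ext q
          simp only [Set.indicator_apply, Set.mem_Ioo, Set.mem_setOf_eq]
        rw [show Function.uncurry (fun s w => (Ioo (0:ℝ) s).indicator h w * ρ s) =
            fun q : ℝ × ℝ => (Ioo (0:ℝ) q.1).indicator h q.2 * ρ q.1 from rfl, heq]
        exact (((hhmeas.comp measurable_snd).indicator hset).mul
          (hρmeas.comp measurable_fst)).aemeasurable
    _ = ∫⁻ w, (Ioi (0:ℝ)).indicator (fun w => h w * ENNReal.ofReal (Real.exp (-w))) w := by
        refine lintegral_congr fun w => ?_
        by_cases hw : 0 < w
        · have hind : ∀ s : ℝ, (Ioo (0:ℝ) s).indicator h w * ρ s =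
              (Ioi w).indicator (fun s => h w * ρ s) s := by
            intro s
            simp only [Set.indicator_apply, Set.mem_Ioo, Set.mem_Ioi]
            by_cases hsw : w < s
            · simp [hw, hsw]
            · simp [hsw]
          rw [Set.indicator_of_mem (mem_Ioi.2 hw)]
          simp only [hind]
          rw [lintegral_indicator measurableSet_Ioi, Measure.restrict_restrict measurableSet_Ioi,
            Ioi_inter_Ioi, max_eq_left hw.le,
            lintegral_const_mul _ hρmeas, tail_exp]
        · have hind : ∀ s : ℝ, (Ioo (0:ℝ) s).indicator h w * ρ s = 0 := by
            intro s
            rw [Set.indicator_of_notMem (fun hmem => hw hmem.1), zero_mul]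
          rw [Set.indicator_of_notMem (by simpa using hw)]
          simp [hind]
    _ = ∫⁻ w in Ioi (0:ℝ), h w * ENNReal.ofReal (Real.exp (-w)) :=
        lintegral_indicator measurableSet_Ioi _
    _ = ∫⁻ w in Ioi (0:ℝ), I w * ENNReal.ofReal (Real.exp (-w) / w) := by
        refine setLIntegral_congr_fun measurableSet_Ioi ?_
        intro w hw
        beta_reduce
        rw [ENNReal.ofReal_div_of_pos hw, ENNReal.div_eq_inv_mul, hhdef]
        ring
    _ = ((volume.restrict (Set.Ioi (0:ℝ))).withDensity
          (fun w => ENNReal.ofReal (Real.exp (-w) / w))) A := by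
        rw [withDensity_apply _ hA, ← lintegral_indicator hA]
        refine lintegral_congr fun w => ?_
        simp only [Set.indicator_apply, hIdef]
        by_cases hw : w ∈ A <;> simp [hw]
end

section
/- For β > 0, the pushforward of the product of Lebesgue measure on (0,1] with itself under the map (t,s) ↦ t^{1/β} · s^{1/(2β)} is the measure on (0,1] with density w ↦ 2β w^{β-1}(1 - w^{β}). -/
open MeasureTheory Set

private lemma stmt3_meas_f (β : ℝ) :
    Measurable (fun p : ℝ × ℝ => p.1 ^ (1 / β) * p.2 ^ (1 / (2 * β))) := by
  fun_prop

private lemma stmt3_sec_eq (β x t : ℝ) (hβ : 0 < β) (hx : 0 < x) (ht : t ∈ Ioc (0:ℝ) 1) :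
    (volume.restrict (Ioc (0:ℝ) 1))
      (Prod.mk t ⁻¹' ((fun p : ℝ × ℝ => p.1 ^ (1 / β) * p.2 ^ (1 / (2 * β))) ⁻¹' Iic x))
      = ENNReal.ofReal (min 1 ((x ^ β) ^ 2 / t ^ 2)) := by
  have ht0 : 0 < t := ht.1
  have hsetm : MeasurableSet {s : ℝ | t ^ (1/β) * s ^ (1/(2*β)) ≤ x} := by
    apply measurableSet_le (by fun_prop) measurable_const
  have hpre : Prod.mk t ⁻¹' ((fun p : ℝ × ℝ => p.1 ^ (1 / β) * p.2 ^ (1 / (2 * β))) ⁻¹' Iic x)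
      = {s : ℝ | t ^ (1/β) * s ^ (1/(2*β)) ≤ x} := rfl
  rw [hpre, Measure.restrict_apply hsetm]
  have hkey : ∀ s : ℝ, 0 < s → (t ^ (1/β) * s ^ (1/(2*β)) ≤ x ↔ s ≤ (x ^ β) ^ 2 / t ^ 2) := by
    intro s hs
    rw [← Real.rpow_le_rpow_iff (by positivity) hx.le (show (0:ℝ) < 2*β by positivity),
      Real.mul_rpow (by positivity) (by positivity), ← Real.rpow_natCast (x ^ β) 2,
      ← Real.rpow_mul ht0.le, ← Real.rpow_mul hs.le, ← Real.rpow_mul hx.le]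
    have e1 : (1/β) * (2*β) = 2 := by field_simp
    have e2 : (1/(2*β)) * (2*β) = 1 := by field_simp
    have e3 : β * (2:ℕ) = 2 * β := by push_cast; ring
    rw [e1, e2, e3, Real.rpow_one, Real.rpow_two, le_div_iff₀ (by positivity)]
    constructor <;> intro h <;> nlinarith
  have hset : {s : ℝ | t ^ (1/β) * s ^ (1/(2*β)) ≤ x} ∩ Ioc 0 1
      = Ioc 0 (min 1 ((x ^ β) ^ 2 / t ^ 2)) := by
    ext s
    simp only [mem_inter_iff, mem_setOf_eq, mem_Ioc, le_min_iff]
    constructor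
    · rintro ⟨h1, h2, h3⟩
      exact ⟨h2, h3, (hkey s h2).1 h1⟩
    · rintro ⟨h1, h2, h3⟩
      exact ⟨(hkey s h1).2 h3, h1, h2⟩
  rw [hset, Real.volume_Ioc, sub_zero]

private lemma stmt3_integ_min (u : ℝ) (hu : 0 < u) (hu1 : u ≤ 1) :
    ∫⁻ t in Ioc (0:ℝ) 1, ENNReal.ofReal (min 1 (u ^ 2 / t ^ 2))
      = ENNReal.ofReal (2 * u - u ^ 2) := by
  rw [← Ioc_union_Ioc_eq_Ioc hu.le hu1,
    lintegral_union measurableSet_Ioc (Ioc_disjoint_Ioc_of_le le_rfl)]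
  have h1 : ∫⁻ t in Ioc (0:ℝ) u, ENNReal.ofReal (min 1 (u ^ 2 / t ^ 2))
      = ENNReal.ofReal u := by
    have e : ∀ t ∈ Ioc (0:ℝ) u, ENNReal.ofReal (min 1 (u ^ 2 / t ^ 2)) = (1 : ENNReal) := by
      intro t ht
      have ht0 : 0 < t := ht.1
      have h : (1:ℝ) ≤ u ^ 2 / t ^ 2 := by
        rw [le_div_iff₀ (by positivity)]
        nlinarith [ht.2]
      rw [min_eq_left h, ENNReal.ofReal_one]
    rw [setLIntegral_congr_fun_ae measurableSet_Ioc (ae_of_all _ e), setLIntegral_one,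
      Real.volume_Ioc, sub_zero]
  have h2 : ∫⁻ t in Ioc u 1, ENNReal.ofReal (min 1 (u ^ 2 / t ^ 2))
      = ENNReal.ofReal (u - u ^ 2) := by
    have e : ∀ t ∈ Ioc u (1:ℝ), ENNReal.ofReal (min 1 (u ^ 2 / t ^ 2))
        = ENNReal.ofReal (u ^ 2 / t ^ 2) := by
      intro t ht
      have ht0 : 0 < t := hu.trans ht.1
      have h : u ^ 2 / t ^ 2 ≤ 1 := by
        rw [div_le_one (by positivity)]
        nlinarith [ht.1]
      rw [min_eq_right h]
    rw [setLIntegral_congr_fun_ae measurableSet_Ioc (ae_of_all _ e),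
      ← ofReal_integral_eq_lintegral_ofReal]
    · congr 1
      rw [← intervalIntegral.integral_of_le hu1]
      have e2 : ∀ t ∈ uIcc u 1, u ^ 2 / t ^ 2 = u ^ 2 * t ^ (-2 : ℝ) := by
        intro t ht
        rw [uIcc_of_le hu1] at ht
        have ht0 : 0 < t := lt_of_lt_of_le hu ht.1
        rw [Real.rpow_neg ht0.le, Real.rpow_two, div_eq_mul_inv]
      rw [intervalIntegral.integral_congr e2, intervalIntegral.integral_const_mul,
        integral_rpow (Or.inr ⟨by norm_num, by
          rw [uIcc_of_le hu1]; exact fun h => absurd h.1 (by linarith)⟩)]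
      norm_num
      rw [Real.rpow_neg_one]
      have hune : u ≠ 0 := hu.ne'
      field_simp
      ring
    · apply (ContinuousOn.integrableOn_Icc ?_).mono_set Ioc_subset_Icc_self
      apply ContinuousOn.div continuousOn_const (by fun_prop)
      intro t ht
      have : 0 < t := lt_of_lt_of_le hu ht.1
      positivity
    · filter_upwards [ae_restrict_mem measurableSet_Ioc] with t ht
      have ht0 : 0 < t := lt_of_lt_of_le hu ht.1.le
      positivity
  rw [h1, h2, ← ENNReal.ofReal_add hu.le (by nlinarith)]
  ring_nf

private lemma stmt3_lhs_Iic (β x : ℝ) (hβ : 0 < β) (hx : 0 < x) (hx1 : x ≤ 1) :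
    Measure.map (fun p : ℝ × ℝ => p.1 ^ (1 / β) * p.2 ^ (1 / (2 * β)))
      ((volume.restrict (Ioc (0:ℝ) 1)).prod (volume.restrict (Ioc (0:ℝ) 1))) (Iic x)
      = ENNReal.ofReal (2 * x ^ β - x ^ (2 * β)) := by
  rw [Measure.map_apply (stmt3_meas_f β) measurableSet_Iic,
    Measure.prod_apply ((stmt3_meas_f β) measurableSet_Iic)]
  have e : ∀ t ∈ Ioc (0:ℝ) 1,
      (volume.restrict (Ioc (0:ℝ) 1))
        (Prod.mk t ⁻¹' ((fun p : ℝ × ℝ => p.1 ^ (1 / β) * p.2 ^ (1 / (2 * β))) ⁻¹' Iic x))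
      = ENNReal.ofReal (min 1 ((x ^ β) ^ 2 / t ^ 2)) :=
    fun t ht => stmt3_sec_eq β x t hβ hx ht
  rw [setLIntegral_congr_fun_ae measurableSet_Ioc (ae_of_all _ e),
    stmt3_integ_min (x ^ β) (by positivity) (Real.rpow_le_one hx.le hx1 hβ.le)]
  congr 1
  rw [← Real.rpow_natCast (x ^ β) 2, ← Real.rpow_mul hx.le]
  norm_num
  ring_nf

private lemma stmt3_rhs_Iic (β x : ℝ) (hβ : 0 < β) (hx : 0 < x) (hx1 : x ≤ 1) :
    ((volume.restrict (Ioc (0:ℝ) 1)).withDensity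
      (fun w => ENNReal.ofReal (2 * β * w ^ (β - 1) * (1 - w ^ β)))) (Iic x)
      = ENNReal.ofReal (2 * x ^ β - x ^ (2 * β)) := by
  rw [withDensity_apply _ measurableSet_Iic, Measure.restrict_restrict measurableSet_Iic]
  have hset : Iic x ∩ Ioc (0:ℝ) 1 = Ioc 0 x := by
    ext w
    simp only [mem_inter_iff, mem_Iic, mem_Ioc]
    constructor
    · rintro ⟨h1, h2, h3⟩; exact ⟨h2, h1⟩
    · rintro ⟨h1, h2⟩; exact ⟨h2, h1, h2.trans hx1⟩
  rw [hset]
  have hint1 : IntegrableOn (fun w : ℝ => 2 * β * w ^ (β - 1) - 2 * β * w ^ (2 * β - 1))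
      (Ioc 0 x) := by
    rw [← intervalIntegrable_iff_integrableOn_Ioc_of_le hx.le]
    exact ((intervalIntegral.intervalIntegrable_rpow' (by linarith)).const_mul _).sub
      ((intervalIntegral.intervalIntegrable_rpow' (by linarith)).const_mul _)
  have heq : ∀ w ∈ Ioc (0:ℝ) x,
      2 * β * w ^ (β - 1) * (1 - w ^ β) = 2 * β * w ^ (β - 1) - 2 * β * w ^ (2 * β - 1) := by
    intro w hw
    have hw0 : 0 < w := hw.1
    have : w ^ (β - 1) * w ^ β = w ^ (2 * β - 1) := by
      rw [← Real.rpow_add hw0]; ring_nf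
    nlinarith [this]
  have hint : IntegrableOn (fun w : ℝ => 2 * β * w ^ (β - 1) * (1 - w ^ β)) (Ioc 0 x) := by
    exact (integrableOn_congr_fun heq measurableSet_Ioc).mpr hint1
  rw [← ofReal_integral_eq_lintegral_ofReal hint]
  · congr 1
    rw [setIntegral_congr_fun measurableSet_Ioc heq, ← intervalIntegral.integral_of_le hx.le,
      intervalIntegral.integral_sub
        ((intervalIntegral.intervalIntegrable_rpow' (by linarith)).const_mul _)
        ((intervalIntegral.intervalIntegrable_rpow' (by linarith)).const_mul _),
      intervalIntegral.integral_const_mul, intervalIntegral.integral_const_mul,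
      integral_rpow (Or.inl (by linarith)), integral_rpow (Or.inl (by linarith))]
    have h1 : β - 1 + 1 = β := by ring
    have h2 : 2 * β - 1 + 1 = 2 * β := by ring
    rw [h1, h2, Real.zero_rpow hβ.ne', Real.zero_rpow (by positivity)]
    field_simp
    ring
  · filter_upwards [ae_restrict_mem measurableSet_Ioc] with w hw
    have hw0 : 0 < w := hw.1
    have hwb : w ^ β ≤ 1 := Real.rpow_le_one hw0.le (hw.2.trans hx1) hβ.le
    have : (0:ℝ) ≤ w ^ (β - 1) := Real.rpow_nonneg hw0.le _
    show (0:ℝ) ≤ 2 * β * w ^ (β - 1) * (1 - w ^ β)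
    exact mul_nonneg (mul_nonneg (by positivity) this) (by linarith)

theorem stmt3 (β : ℝ) (hβ : 0 < β) :
    Measure.map (fun p : ℝ × ℝ => p.1 ^ (1 / β) * p.2 ^ (1 / (2 * β)))
      ((volume.restrict (Set.Ioc (0:ℝ) 1)).prod (volume.restrict (Set.Ioc (0:ℝ) 1))) =
    (volume.restrict (Set.Ioc (0:ℝ) 1)).withDensity
      (fun w => ENNReal.ofReal (2 * β * w ^ (β - 1) * (1 - w ^ β))) := by
  haveI : IsFiniteMeasure (volume.restrict (Ioc (0:ℝ) 1)) := by
    constructor; simp [Real.volume_Ioc]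
  refine Measure.ext_of_Iic _ _ (fun x => ?_)
  rcases le_or_gt x 0 with hx | hx
  · -- both zero
    have hL : Measure.map (fun p : ℝ × ℝ => p.1 ^ (1 / β) * p.2 ^ (1 / (2 * β)))
        ((volume.restrict (Ioc (0:ℝ) 1)).prod (volume.restrict (Ioc (0:ℝ) 1))) (Iic x) = 0 := by
      rw [Measure.map_apply (stmt3_meas_f β) measurableSet_Iic, Measure.prod_restrict,
        Measure.restrict_apply ((stmt3_meas_f β) measurableSet_Iic)]
      convert measure_empty (μ := volume.prod volume)
      ext ⟨t, s⟩
      simp only [mem_inter_iff, mem_preimage, mem_Iic, mem_prod, mem_Ioc, mem_empty_iff_false,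
        iff_false]
      rintro ⟨h, ⟨ht0, _⟩, ⟨hs0, _⟩⟩
      have : (0:ℝ) < t ^ (1/β) * s ^ (1/(2*β)) := by positivity
      linarith
    rw [hL, withDensity_apply _ measurableSet_Iic,
      Measure.restrict_restrict measurableSet_Iic]
    have : Iic x ∩ Ioc (0:ℝ) 1 = ∅ := by
      ext w
      simp only [mem_inter_iff, mem_Iic, mem_Ioc, mem_empty_iff_false, iff_false]
      rintro ⟨h, hw0, _⟩
      linarith
    rw [this]
    simp
  rcases le_or_gt x 1 with hx1 | hx1
  · rw [stmt3_lhs_Iic β x hβ hx hx1, stmt3_rhs_Iic β x hβ hx hx1]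
  · -- reduce to x = 1
    have hsub : ∀ y : ℝ, 1 ≤ y →
        (fun p : ℝ × ℝ => p.1 ^ (1 / β) * p.2 ^ (1 / (2 * β))) ⁻¹' Iic y
          ∩ (Ioc (0:ℝ) 1 ×ˢ Ioc (0:ℝ) 1) = Ioc (0:ℝ) 1 ×ˢ Ioc (0:ℝ) 1 := by
      intro y hy
      apply inter_eq_self_of_subset_right
      rintro ⟨t, s⟩ ⟨ht, hs⟩
      simp only [mem_preimage, mem_Iic]
      have h1 : t ^ (1/β) ≤ 1 := Real.rpow_le_one ht.1.le ht.2 (by positivity)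
      have h2 : s ^ (1/(2*β)) ≤ 1 := Real.rpow_le_one hs.1.le hs.2 (by positivity)
      have h3 : (0:ℝ) ≤ s ^ (1/(2*β)) := Real.rpow_nonneg hs.1.le _
      calc t ^ (1/β) * s ^ (1/(2*β)) ≤ 1 * 1 := mul_le_mul h1 h2 h3 zero_le_one
        _ = 1 := by ring
        _ ≤ y := hy
    have hL : Measure.map (fun p : ℝ × ℝ => p.1 ^ (1 / β) * p.2 ^ (1 / (2 * β)))
        ((volume.restrict (Ioc (0:ℝ) 1)).prod (volume.restrict (Ioc (0:ℝ) 1))) (Iic x)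
        = Measure.map (fun p : ℝ × ℝ => p.1 ^ (1 / β) * p.2 ^ (1 / (2 * β)))
        ((volume.restrict (Ioc (0:ℝ) 1)).prod (volume.restrict (Ioc (0:ℝ) 1))) (Iic 1) := by
      rw [Measure.map_apply (stmt3_meas_f β) measurableSet_Iic,
        Measure.map_apply (stmt3_meas_f β) measurableSet_Iic, Measure.prod_restrict,
        Measure.restrict_apply ((stmt3_meas_f β) measurableSet_Iic),
        Measure.restrict_apply ((stmt3_meas_f β) measurableSet_Iic),
        hsub x hx1.le, hsub 1 le_rfl]
    have hR : ((volume.restrict (Ioc (0:ℝ) 1)).withDensity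
        (fun w => ENNReal.ofReal (2 * β * w ^ (β - 1) * (1 - w ^ β)))) (Iic x)
        = ((volume.restrict (Ioc (0:ℝ) 1)).withDensity
        (fun w => ENNReal.ofReal (2 * β * w ^ (β - 1) * (1 - w ^ β)))) (Iic 1) := by
      have i1 : Iic x ∩ Ioc (0:ℝ) 1 = Ioc (0:ℝ) 1 :=
        inter_eq_self_of_subset_right (fun w hw => le_trans hw.2 hx1.le)
      have i2 : Iic (1:ℝ) ∩ Ioc (0:ℝ) 1 = Ioc (0:ℝ) 1 :=
        inter_eq_self_of_subset_right (fun w hw => hw.2)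
      rw [withDensity_apply _ measurableSet_Iic, withDensity_apply _ measurableSet_Iic,
        Measure.restrict_restrict measurableSet_Iic,
        Measure.restrict_restrict measurableSet_Iic, i1, i2]
    rw [hL, hR, stmt3_lhs_Iic β 1 hβ one_pos le_rfl, stmt3_rhs_Iic β 1 hβ one_pos le_rfl]
end

section
/- Let M be a σ-finite measure on a separable Hilbert space H (minus origin) with ∫ (1 ∧ ‖x‖²) dM(x) < ∞. Then ∫₀^1 ∫ (1 ∧ t²‖x‖²) dM(x) t^{-1} dt = (1/2)∫(1∧‖x‖²) dM(x) + ∫_{‖x‖>1} log‖x‖ dM(x) (both sides possibly infinite, equal). In particular the left side is finite iff ∫_{‖x‖>1} log‖x‖ dM(x) < ∞. -/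
open MeasureTheory

private lemma lint_Ioc {f : ℝ → ℝ} {a b : ℝ} (hab : a ≤ b)
    (hint : IntervalIntegrable f volume a b)
    (hf : ∀ t ∈ Set.Ioc a b, 0 ≤ f t) :
    ∫⁻ t in Set.Ioc a b, ENNReal.ofReal (f t) = ENNReal.ofReal (∫ t in a..b, f t) := by
  rw [intervalIntegral.integral_of_le hab,
    ofReal_integral_eq_lintegral_ofReal hint.1
      ((ae_restrict_iff' measurableSet_Ioc).2 (ae_of_all _ hf))]

private lemma key (a : ℝ) (ha : 0 ≤ a) :
    ∫⁻ t in Set.Ioc (0:ℝ) 1,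
      ENNReal.ofReal (min 1 (t ^ 2 * a ^ 2)) * ENNReal.ofReal t⁻¹
    = ENNReal.ofReal (1 / 2 * min 1 (a ^ 2))
      + ENNReal.ofReal (if 1 < a then Real.log a else 0) := by
  have hmul : ∀ t ∈ Set.Ioc (0:ℝ) 1,
      ENNReal.ofReal (min 1 (t ^ 2 * a ^ 2)) * ENNReal.ofReal t⁻¹
      = ENNReal.ofReal (min 1 (t ^ 2 * a ^ 2) * t⁻¹) := fun t ht =>
    (ENNReal.ofReal_mul (le_min zero_le_one (by positivity))).symm
  rw [setLIntegral_congr_fun measurableSet_Ioc hmul]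
  by_cases hca : 1 < a
  · have ha0 : 0 < a := lt_trans one_pos hca
    have hainv : 0 < a⁻¹ := inv_pos.2 ha0
    have hinv1 : a⁻¹ ≤ 1 := by
      rw [inv_le_one_iff₀]; right; exact hca.le
    rw [show Set.Ioc (0:ℝ) 1 = Set.Ioc 0 a⁻¹ ∪ Set.Ioc a⁻¹ 1 from
      (Set.Ioc_union_Ioc_eq_Ioc hainv.le hinv1).symm,
      lintegral_union measurableSet_Ioc (Set.Ioc_disjoint_Ioc_of_le le_rfl)]
    have h1 : ∫⁻ t in Set.Ioc (0:ℝ) a⁻¹, ENNReal.ofReal (min 1 (t ^ 2 * a ^ 2) * t⁻¹)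
        = ENNReal.ofReal (1 / 2) := by
      have hcongr : ∀ t ∈ Set.Ioc (0:ℝ) a⁻¹,
          ENNReal.ofReal (min 1 (t ^ 2 * a ^ 2) * t⁻¹) = ENNReal.ofReal (a ^ 2 * t) := by
        intro t ht
        have ht0 : 0 < t := ht.1
        have hta : t * a ≤ 1 := by
          calc t * a ≤ a⁻¹ * a := by nlinarith [ht.2]
          _ = 1 := inv_mul_cancel₀ ha0.ne'
        have hle : t ^ 2 * a ^ 2 ≤ 1 := by
          nlinarith [mul_nonneg (mul_nonneg ht0.le ha0.le) (sub_nonneg.2 hta)]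
        rw [min_eq_right hle]
        congr 1
        field_simp
      rw [setLIntegral_congr_fun measurableSet_Ioc hcongr,
        lint_Ioc hainv.le (Continuous.intervalIntegrable (by continuity) _ _)
          (fun t ht => mul_nonneg (sq_nonneg a) ht.1.le)]
      congr 1
      rw [intervalIntegral.integral_const_mul, integral_id]
      field_simp
      simp
    have h2 : ∫⁻ t in Set.Ioc a⁻¹ 1, ENNReal.ofReal (min 1 (t ^ 2 * a ^ 2) * t⁻¹)
        = ENNReal.ofReal (Real.log a) := by
      have hcongr : ∀ t ∈ Set.Ioc a⁻¹ 1,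
          ENNReal.ofReal (min 1 (t ^ 2 * a ^ 2) * t⁻¹) = ENNReal.ofReal t⁻¹ := by
        intro t ht
        have ht0 : 0 < t := lt_of_lt_of_le hainv ht.1.le
        have hta : 1 ≤ t * a := by
          calc (1:ℝ) = a⁻¹ * a := (inv_mul_cancel₀ ha0.ne').symm
          _ ≤ t * a := by nlinarith [ht.1]
        have hge : 1 ≤ t ^ 2 * a ^ 2 := by nlinarith [sq_nonneg (t * a - 1), hta]
        rw [min_eq_left hge, one_mul]
      have hii : IntervalIntegrable (fun t : ℝ => t⁻¹) volume a⁻¹ 1 := by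
        apply intervalIntegral.intervalIntegrable_inv
        · intro x hx
          rw [Set.uIcc_of_le hinv1] at hx
          exact (lt_of_lt_of_le hainv hx.1).ne'
        · exact continuousOn_id
      rw [setLIntegral_congr_fun measurableSet_Ioc hcongr,
        lint_Ioc hinv1 hii (fun t ht => inv_nonneg.2 (hainv.le.trans ht.1.le))]
      congr 1
      rw [integral_inv_of_pos hainv one_pos, one_div, inv_inv]
    rw [h1, h2, if_pos hca, min_eq_left (by nlinarith [sq_nonneg (a - 1)])]
    norm_num
  · push_neg at hca
    have hmin : min 1 (a ^ 2) = a ^ 2 := min_eq_right (by nlinarith)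
    have hcongr : ∀ t ∈ Set.Ioc (0:ℝ) 1,
        ENNReal.ofReal (min 1 (t ^ 2 * a ^ 2) * t⁻¹) = ENNReal.ofReal (a ^ 2 * t) := by
      intro t ht
      have ht0 : 0 < t := ht.1
      have h1 : t ^ 2 ≤ 1 := by nlinarith [ht.1, ht.2]
      have h2 : a ^ 2 ≤ 1 := by nlinarith
      have hle : t ^ 2 * a ^ 2 ≤ 1 := by nlinarith [sq_nonneg a, sq_nonneg t]
      rw [min_eq_right hle]
      congr 1
      field_simp
    rw [setLIntegral_congr_fun measurableSet_Ioc hcongr,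
      lint_Ioc zero_le_one (Continuous.intervalIntegrable (by continuity) _ _)
        (fun t ht => mul_nonneg (sq_nonneg a) ht.1.le),
      if_neg (not_lt.2 hca), hmin]
    rw [intervalIntegral.integral_const_mul, integral_id]
    norm_num
    ring_nf
    rw [← ENNReal.ofReal_mul (by norm_num : (0:ℝ) ≤ 1/2), mul_comm]

/-- Example 1: domain of `I^{t, -log t}_{(0,1]}` on a Hilbert space; `|dr(t)| = dt/t`. -/
theorem stmt10 {H : Type*} [NormedAddCommGroup H] [InnerProductSpace ℝ H]
    [MeasurableSpace H] [BorelSpace H] [SecondCountableTopology H]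
    (M : Measure H) [SigmaFinite M] (h0 : M {0} = 0)
    (hLevy : (∫⁻ x, ENNReal.ofReal (min 1 (‖x‖ ^ 2)) ∂M) ≠ ⊤) :
    (∫⁻ t in Set.Ioc (0:ℝ) 1,
        (∫⁻ x, ENNReal.ofReal (min 1 (t ^ 2 * ‖x‖ ^ 2)) ∂M) * ENNReal.ofReal t⁻¹)
      = (1 / 2) * (∫⁻ x, ENNReal.ofReal (min 1 (‖x‖ ^ 2)) ∂M)
          + ∫⁻ x in {x : H | 1 < ‖x‖}, ENNReal.ofReal (Real.log ‖x‖) ∂M := by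
  have hmx : ∀ t : ℝ, Measurable fun x : H => ENNReal.ofReal (min 1 (t ^ 2 * ‖x‖ ^ 2)) := by
    intro t; fun_prop
  have hswap :
      (∫⁻ t in Set.Ioc (0:ℝ) 1,
          ∫⁻ x, ENNReal.ofReal (min 1 (t ^ 2 * ‖x‖ ^ 2)) * ENNReal.ofReal t⁻¹ ∂M)
      = ∫⁻ x, (∫⁻ t in Set.Ioc (0:ℝ) 1,
          ENNReal.ofReal (min 1 (t ^ 2 * ‖x‖ ^ 2)) * ENNReal.ofReal t⁻¹) ∂M := by
    apply lintegral_lintegral_swap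
    apply Measurable.aemeasurable
    fun_prop
  calc (∫⁻ t in Set.Ioc (0:ℝ) 1,
        (∫⁻ x, ENNReal.ofReal (min 1 (t ^ 2 * ‖x‖ ^ 2)) ∂M) * ENNReal.ofReal t⁻¹)
      = ∫⁻ t in Set.Ioc (0:ℝ) 1,
          ∫⁻ x, ENNReal.ofReal (min 1 (t ^ 2 * ‖x‖ ^ 2)) * ENNReal.ofReal t⁻¹ ∂M := by
        refine lintegral_congr fun t => ?_
        rw [lintegral_mul_const _ (hmx t)]
    _ = ∫⁻ x, (∫⁻ t in Set.Ioc (0:ℝ) 1,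
          ENNReal.ofReal (min 1 (t ^ 2 * ‖x‖ ^ 2)) * ENNReal.ofReal t⁻¹) ∂M := hswap
    _ = ∫⁻ x, (ENNReal.ofReal (1 / 2 * min 1 (‖x‖ ^ 2))
          + ENNReal.ofReal (if 1 < ‖x‖ then Real.log ‖x‖ else 0)) ∂M :=
        lintegral_congr fun x => key ‖x‖ (norm_nonneg x)
    _ = (∫⁻ x, ENNReal.ofReal (1 / 2 * min 1 (‖x‖ ^ 2)) ∂M)
          + ∫⁻ x, ENNReal.ofReal (if 1 < ‖x‖ then Real.log ‖x‖ else 0) ∂M := by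
        apply lintegral_add_left
        fun_prop
    _ = (1 / 2) * (∫⁻ x, ENNReal.ofReal (min 1 (‖x‖ ^ 2)) ∂M)
          + ∫⁻ x in {x : H | 1 < ‖x‖}, ENNReal.ofReal (Real.log ‖x‖) ∂M := by
        congr 1
        · simp_rw [ENNReal.ofReal_mul (by norm_num : (0:ℝ) ≤ 1/2)]
          rw [lintegral_const_mul _ (by fun_prop)]
          congr 1
          rw [ENNReal.ofReal_div_of_pos two_pos, ENNReal.ofReal_one, ENNReal.ofReal_ofNat]
        · have hs : MeasurableSet {x : H | 1 < ‖x‖} :=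
            measurableSet_lt measurable_const measurable_norm
          rw [← lintegral_indicator hs]
          refine lintegral_congr fun x => ?_
          simp [Set.indicator_apply, Set.mem_setOf_eq, apply_ite ENNReal.ofReal]
end

section
/- Let M be a measure on a Hilbert space H\{0\} with ∫(1∧‖x‖²)dM < ∞. Then ∫₀^∞ ∫ (1∧ t²‖x‖²) dM(x) (e^{-t}/t) dt < ∞ if and only if ∫_{‖x‖>1} log‖x‖ dM(x) < ∞. -/
open MeasureTheory Set
open scoped ENNReal

namespace Stmt11Aux

/-- `a ≤ b → 0 < c → a / c ≤ b / c`. -/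
private lemma div_le_div_of_nonneg_right' {a b c : ℝ} (h : a ≤ b) (hc : 0 < c) :
    a / c ≤ b / c := by gcongr

/-- The inner time integral. -/
noncomputable def I (r : ℝ) : ℝ≥0∞ :=
  ∫⁻ t in Set.Ioi (0:ℝ),
    ENNReal.ofReal (min 1 (t ^ 2 * r ^ 2)) * ENNReal.ofReal (Real.exp (-t) / t)

/-- An auxiliary finite constant. -/
noncomputable def C : ℝ≥0∞ := ∫⁻ t in Set.Ioi (0:ℝ), ENNReal.ofReal (Real.exp (-(1/2) * t))

lemma C_ne_top : C ≠ ⊤ := by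
  have h : IntegrableOn (fun t : ℝ => Real.exp (-(1/2) * t)) (Ioi 0) :=
    exp_neg_integrableOn_Ioi 0 (by norm_num)
  rw [C, ← ofReal_integral_eq_lintegral_ofReal h (ae_of_all _ fun t => (Real.exp_pos _).le)]
  exact ENNReal.ofReal_ne_top

lemma oneDiv_lintegral {a : ℝ} (ha0 : 0 < a) (ha1 : a ≤ 1) :
    ∫⁻ t in Ioc a 1, ENNReal.ofReal (1 / t) = ENNReal.ofReal (Real.log (1 / a)) := by
  have hi : IntegrableOn (fun t : ℝ => 1 / t) (Ioc a 1) := by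
    apply IntegrableOn.mono_set ?_ Ioc_subset_Icc_self
    apply ContinuousOn.integrableOn_Icc
    exact ContinuousOn.div continuousOn_const continuousOn_id
      (fun t ht => ne_of_gt (lt_of_lt_of_le ha0 ht.1))
  rw [← ofReal_integral_eq_lintegral_ofReal hi]
  · congr 1
    rw [← intervalIntegral.integral_of_le ha1, integral_one_div]
    rw [Set.uIcc_of_le ha1]
    intro h
    exact absurd h.1 (by linarith)
  · filter_upwards [ae_restrict_mem measurableSet_Ioc] with t ht
    have ht0 : 0 < t := lt_of_lt_of_le ha0 ht.1.le
    positivity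

lemma I_le_small {r : ℝ} (hr0 : 0 ≤ r) (hr : r ≤ 1) :
    I r ≤ 2 * C * ENNReal.ofReal (r ^ 2) := by
  have key : ∀ t : ℝ, 0 < t →
      min 1 (t ^ 2 * r ^ 2) * (Real.exp (-t) / t) ≤ r ^ 2 * 2 * Real.exp (-(1/2) * t) := by
    intro t ht
    have h1 : min 1 (t ^ 2 * r ^ 2) * (Real.exp (-t) / t) ≤ t ^ 2 * r ^ 2 * (Real.exp (-t) / t) :=
      mul_le_mul_of_nonneg_right (min_le_right _ _) (by positivity)
    have h2 : t ^ 2 * r ^ 2 * (Real.exp (-t) / t) = r ^ 2 * (t * Real.exp (-t)) := by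
      field_simp
    have h3 : t * Real.exp (-t) ≤ 2 * Real.exp (-(1/2) * t) := by
      have hadd := Real.add_one_le_exp (t / 2)
      have hpos : 0 < Real.exp (-t) := Real.exp_pos _
      have ht2 : t ≤ 2 * Real.exp (t / 2) := by nlinarith
      have := mul_le_mul_of_nonneg_right ht2 hpos.le
      calc t * Real.exp (-t) ≤ 2 * Real.exp (t / 2) * Real.exp (-t) := this
        _ = 2 * Real.exp (-(1/2) * t) := by
            rw [mul_assoc, ← Real.exp_add]; ring_nf
    calc min 1 (t ^ 2 * r ^ 2) * (Real.exp (-t) / t)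
        ≤ r ^ 2 * (t * Real.exp (-t)) := by rw [← h2]; exact h1
      _ ≤ r ^ 2 * (2 * Real.exp (-(1/2) * t)) := by
          apply mul_le_mul_of_nonneg_left h3 (by positivity)
      _ = r ^ 2 * 2 * Real.exp (-(1/2) * t) := by ring
  calc I r ≤ ∫⁻ t in Ioi (0:ℝ),
        ENNReal.ofReal (r ^ 2 * 2) * ENNReal.ofReal (Real.exp (-(1/2) * t)) := by
        apply setLIntegral_mono
        · exact (measurable_const.mul
            ((Real.measurable_exp.comp (measurable_id.const_mul _)).ennreal_ofReal))
        · intro t ht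
          rw [← ENNReal.ofReal_mul (by positivity), ← ENNReal.ofReal_mul (by positivity)]
          exact ENNReal.ofReal_le_ofReal (key t ht)
    _ = ENNReal.ofReal (r ^ 2 * 2) * C := lintegral_const_mul' _ _ ENNReal.ofReal_ne_top
    _ = 2 * C * ENNReal.ofReal (r ^ 2) := by
        rw [ENNReal.ofReal_mul (by positivity), ENNReal.ofReal_ofNat]; ring

lemma I_le_big {r : ℝ} (hr : 1 < r) : I r ≤ 2 + ENNReal.ofReal (Real.log r) := by
  have hr0 : 0 < r := lt_trans one_pos hr
  set a : ℝ := r⁻¹ with ha_def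
  have ha0 : 0 < a := inv_pos.mpr hr0
  have ha1 : a < 1 := inv_lt_one_of_one_lt₀ hr
  have hsplit1 : Ioi (0:ℝ) = Ioc 0 a ∪ Ioi a := (Ioc_union_Ioi_eq_Ioi ha0.le).symm
  have hsplit2 : Ioi a = Ioc a 1 ∪ Ioi 1 := (Ioc_union_Ioi_eq_Ioi ha1.le).symm
  have hIeq : I r = (∫⁻ t in Ioc 0 a,
        ENNReal.ofReal (min 1 (t ^ 2 * r ^ 2)) * ENNReal.ofReal (Real.exp (-t) / t))
      + ((∫⁻ t in Ioc a 1,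
        ENNReal.ofReal (min 1 (t ^ 2 * r ^ 2)) * ENNReal.ofReal (Real.exp (-t) / t))
      + (∫⁻ t in Ioi 1,
        ENNReal.ofReal (min 1 (t ^ 2 * r ^ 2)) * ENNReal.ofReal (Real.exp (-t) / t))) := by
    rw [I, hsplit1, lintegral_union measurableSet_Ioi Ioc_disjoint_Ioi_same, hsplit2,
      lintegral_union measurableSet_Ioi Ioc_disjoint_Ioi_same]
  have pA : (∫⁻ t in Ioc 0 a,
      ENNReal.ofReal (min 1 (t ^ 2 * r ^ 2)) * ENNReal.ofReal (Real.exp (-t) / t)) ≤ 1 := by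
    calc (∫⁻ t in Ioc 0 a,
        ENNReal.ofReal (min 1 (t ^ 2 * r ^ 2)) * ENNReal.ofReal (Real.exp (-t) / t))
        ≤ ∫⁻ _ in Ioc 0 a, ENNReal.ofReal r := by
          apply setLIntegral_mono measurable_const
          intro t ht
          rw [← ENNReal.ofReal_mul (by positivity)]
          apply ENNReal.ofReal_le_ofReal
          have ht0 : 0 < t := ht.1
          have hta : t ≤ a := ht.2
          have he1 : Real.exp (-t) ≤ 1 := by
            calc Real.exp (-t) ≤ Real.exp 0 := Real.exp_le_exp.2 (by linarith)
              _ = 1 := Real.exp_zero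
          calc min 1 (t ^ 2 * r ^ 2) * (Real.exp (-t) / t)
              ≤ t ^ 2 * r ^ 2 * (1 / t) := by
                apply mul_le_mul (min_le_right _ _) _ (by positivity) (by positivity)
                exact div_le_div_of_nonneg_right' he1 ht0
            _ = t * r ^ 2 := by field_simp
            _ ≤ a * r ^ 2 := by nlinarith
            _ = r := by rw [ha_def, pow_two, inv_mul_cancel_left₀ (ne_of_gt hr0)]
      _ = ENNReal.ofReal r * volume (Ioc (0:ℝ) a) := setLIntegral_const _ _
      _ = ENNReal.ofReal r * ENNReal.ofReal a := by rw [Real.volume_Ioc, sub_zero]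
      _ = 1 := by
          rw [← ENNReal.ofReal_mul hr0.le, ha_def, mul_inv_cancel₀ (ne_of_gt hr0),
            ENNReal.ofReal_one]
  have pB : (∫⁻ t in Ioc a 1,
      ENNReal.ofReal (min 1 (t ^ 2 * r ^ 2)) * ENNReal.ofReal (Real.exp (-t) / t))
      ≤ ENNReal.ofReal (Real.log r) := by
    calc (∫⁻ t in Ioc a 1,
        ENNReal.ofReal (min 1 (t ^ 2 * r ^ 2)) * ENNReal.ofReal (Real.exp (-t) / t))
        ≤ ∫⁻ t in Ioc a 1, ENNReal.ofReal (1 / t) := by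
          apply setLIntegral_mono ((measurable_const.div measurable_id).ennreal_ofReal)
          intro t ht
          rw [← ENNReal.ofReal_mul (by positivity)]
          apply ENNReal.ofReal_le_ofReal
          have ht0 : 0 < t := lt_trans ha0 ht.1
          have he1 : Real.exp (-t) ≤ 1 := by
            calc Real.exp (-t) ≤ Real.exp 0 := Real.exp_le_exp.2 (by linarith)
              _ = 1 := Real.exp_zero
          calc min 1 (t ^ 2 * r ^ 2) * (Real.exp (-t) / t)
              ≤ 1 * (1 / t) := by
                apply mul_le_mul (min_le_left _ _) _ (by positivity) (by norm_num)
                exact div_le_div_of_nonneg_right' he1 ht0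
            _ = 1 / t := one_mul _
      _ = ENNReal.ofReal (Real.log (1 / a)) := oneDiv_lintegral ha0 ha1.le
      _ = ENNReal.ofReal (Real.log r) := by rw [ha_def, one_div, inv_inv]
  have pC : (∫⁻ t in Ioi (1:ℝ),
      ENNReal.ofReal (min 1 (t ^ 2 * r ^ 2)) * ENNReal.ofReal (Real.exp (-t) / t)) ≤ 1 := by
    have hi : IntegrableOn (fun t : ℝ => Real.exp (-t)) (Ioi 1) := by
      have := exp_neg_integrableOn_Ioi 1 one_pos
      simpa [neg_one_mul] using this
    calc (∫⁻ t in Ioi (1:ℝ),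
        ENNReal.ofReal (min 1 (t ^ 2 * r ^ 2)) * ENNReal.ofReal (Real.exp (-t) / t))
        ≤ ∫⁻ t in Ioi (1:ℝ), ENNReal.ofReal (Real.exp (-t)) := by
          apply setLIntegral_mono (Real.measurable_exp.comp measurable_neg).ennreal_ofReal
          intro t ht
          rw [← ENNReal.ofReal_mul (by positivity)]
          apply ENNReal.ofReal_le_ofReal
          have ht1 : (1:ℝ) ≤ t := le_of_lt ht
          calc min 1 (t ^ 2 * r ^ 2) * (Real.exp (-t) / t)
              ≤ 1 * (Real.exp (-t) / t) :=
                mul_le_mul_of_nonneg_right (min_le_left _ _) (by positivity)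
            _ = Real.exp (-t) / t := one_mul _
            _ ≤ Real.exp (-t) := div_le_self (Real.exp_pos _).le ht1
      _ = ENNReal.ofReal (∫ t in Ioi (1:ℝ), Real.exp (-t)) :=
          (ofReal_integral_eq_lintegral_ofReal hi
            (ae_of_all _ fun t => (Real.exp_pos _).le)).symm
      _ = ENNReal.ofReal (Real.exp (-1)) := by rw [integral_exp_neg_Ioi]
      _ ≤ 1 := by
          rw [← ENNReal.ofReal_one]
          apply ENNReal.ofReal_le_ofReal
          calc Real.exp (-1) ≤ Real.exp 0 := Real.exp_le_exp.2 (by norm_num)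
            _ = 1 := Real.exp_zero
  calc I r ≤ 1 + (ENNReal.ofReal (Real.log r) + 1) := by rw [hIeq]; gcongr
    _ = 2 + ENNReal.ofReal (Real.log r) := by ring

lemma I_lower {r : ℝ} (hr : 1 < r) :
    ENNReal.ofReal (Real.exp (-1)) * ENNReal.ofReal (Real.log r) ≤ I r := by
  have hr0 : 0 < r := lt_trans one_pos hr
  set a : ℝ := r⁻¹ with ha_def
  have ha0 : 0 < a := inv_pos.mpr hr0
  have ha1 : a < 1 := inv_lt_one_of_one_lt₀ hr
  have hsub : Ioc a 1 ⊆ Ioi (0:ℝ) := fun t ht => lt_trans ha0 ht.1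
  calc ENNReal.ofReal (Real.exp (-1)) * ENNReal.ofReal (Real.log r)
      = ∫⁻ t in Ioc a 1, ENNReal.ofReal (Real.exp (-1)) * ENNReal.ofReal (1 / t) := by
        rw [lintegral_const_mul' _ _ ENNReal.ofReal_ne_top, oneDiv_lintegral ha0 ha1.le,
          ha_def, one_div, inv_inv]
    _ ≤ ∫⁻ t in Ioc a 1,
        ENNReal.ofReal (min 1 (t ^ 2 * r ^ 2)) * ENNReal.ofReal (Real.exp (-t) / t) := by
        apply setLIntegral_mono
        · apply Measurable.fun_mul
          · exact (measurable_const.min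
              ((measurable_id.pow_const 2).mul measurable_const)).ennreal_ofReal
          · exact ((Real.measurable_exp.comp measurable_neg).div measurable_id).ennreal_ofReal
        · intro t ht
          have ht0 : 0 < t := lt_trans ha0 ht.1
          have ht1 : t ≤ 1 := ht.2
          have htr : 1 ≤ t * r := by
            have : a ≤ t := le_of_lt ht.1
            rw [ha_def] at this
            calc (1:ℝ) = r⁻¹ * r := by rw [inv_mul_cancel₀ (ne_of_gt hr0)]
              _ ≤ t * r := by nlinarith
          have hmin : min 1 (t ^ 2 * r ^ 2) = 1 := min_eq_left (by nlinarith)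
          rw [hmin, ENNReal.ofReal_one, one_mul, ← ENNReal.ofReal_mul (Real.exp_pos _).le]
          apply ENNReal.ofReal_le_ofReal
          have : Real.exp (-1) ≤ Real.exp (-t) := Real.exp_le_exp.2 (by linarith)
          calc Real.exp (-1) * (1 / t) = Real.exp (-1) / t := by ring
            _ ≤ Real.exp (-t) / t := by
                exact div_le_div_of_nonneg_right' this ht0
    _ ≤ I r := lintegral_mono_set hsub

end Stmt11Aux

open Stmt11Aux

/-- Example 4: domain of the mapping with time change `r(t) = Γ(0;t)`, i.e. `|dr(t)| = e^{-t}/t dt`,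
consists exactly of the Lévy measures with finite log-moment. -/
theorem stmt11 {H : Type*} [NormedAddCommGroup H] [InnerProductSpace ℝ H]
    [MeasurableSpace H] [BorelSpace H] [SecondCountableTopology H]
    (M : Measure H) [SigmaFinite M] (h0 : M {0} = 0)
    (hLevy : (∫⁻ x, ENNReal.ofReal (min 1 (‖x‖ ^ 2)) ∂M) ≠ ⊤) :
    (∫⁻ t in Set.Ioi (0:ℝ),
        (∫⁻ x, ENNReal.ofReal (min 1 (t ^ 2 * ‖x‖ ^ 2)) ∂M)
          * ENNReal.ofReal (Real.exp (-t) / t)) ≠ ⊤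
      ↔ (∫⁻ x in {x : H | 1 < ‖x‖}, ENNReal.ofReal (Real.log ‖x‖) ∂M) ≠ ⊤ := by
  have hS : MeasurableSet {x : H | 1 < ‖x‖} :=
    measurableSet_lt measurable_const measurable_norm
  -- Tonelli
  have hmeas : Measurable (fun p : ℝ × H =>
      ENNReal.ofReal (min 1 (p.1 ^ 2 * ‖p.2‖ ^ 2)) * ENNReal.ofReal (Real.exp (-p.1) / p.1)) := by
    apply Measurable.fun_mul
    · exact (measurable_const.min ((measurable_fst.pow_const 2).mul
        ((measurable_norm.comp measurable_snd).pow_const 2))).ennreal_ofReal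
    · exact ((Real.measurable_exp.comp measurable_fst.neg).div measurable_fst).ennreal_ofReal
  have hswap : (∫⁻ t in Set.Ioi (0:ℝ),
      (∫⁻ x, ENNReal.ofReal (min 1 (t ^ 2 * ‖x‖ ^ 2)) ∂M)
        * ENNReal.ofReal (Real.exp (-t) / t)) = ∫⁻ x, I ‖x‖ ∂M := by
    have h1 : ∀ t : ℝ, (∫⁻ x, ENNReal.ofReal (min 1 (t ^ 2 * ‖x‖ ^ 2)) ∂M)
        * ENNReal.ofReal (Real.exp (-t) / t)
        = ∫⁻ x, ENNReal.ofReal (min 1 (t ^ 2 * ‖x‖ ^ 2))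
            * ENNReal.ofReal (Real.exp (-t) / t) ∂M := by
      intro t
      exact (lintegral_mul_const _
        ((measurable_const.min ((measurable_norm.pow_const 2).const_mul _)).ennreal_ofReal)).symm
    rw [lintegral_congr h1]
    exact lintegral_lintegral_swap hmeas.aemeasurable
  rw [hswap]
  constructor
  · intro h
    have hpt : ∀ x : H, ENNReal.ofReal (Real.log ‖x‖)
        ≤ ENNReal.ofReal (Real.exp 1) * I ‖x‖ := by
      intro x
      by_cases hx : 1 < ‖x‖
      · calc ENNReal.ofReal (Real.log ‖x‖)
            = ENNReal.ofReal (Real.exp 1)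
              * (ENNReal.ofReal (Real.exp (-1)) * ENNReal.ofReal (Real.log ‖x‖)) := by
              rw [← mul_assoc, ← ENNReal.ofReal_mul (Real.exp_pos _).le, ← Real.exp_add]
              norm_num
          _ ≤ ENNReal.ofReal (Real.exp 1) * I ‖x‖ := mul_le_mul_right (I_lower hx) _
      · have hlog : Real.log ‖x‖ ≤ 0 := Real.log_nonpos (norm_nonneg x) (not_lt.mp hx)
        rw [ENNReal.ofReal_eq_zero.2 hlog]
        exact zero_le
    have hle : (∫⁻ x in {x : H | 1 < ‖x‖}, ENNReal.ofReal (Real.log ‖x‖) ∂M)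
        ≤ ENNReal.ofReal (Real.exp 1) * ∫⁻ x, I ‖x‖ ∂M := by
      calc (∫⁻ x in {x : H | 1 < ‖x‖}, ENNReal.ofReal (Real.log ‖x‖) ∂M)
          ≤ ∫⁻ x in {x : H | 1 < ‖x‖}, ENNReal.ofReal (Real.exp 1) * I ‖x‖ ∂M :=
            lintegral_mono fun x => hpt x
        _ ≤ ∫⁻ x, ENNReal.ofReal (Real.exp 1) * I ‖x‖ ∂M := setLIntegral_le_lintegral _ _
        _ = ENNReal.ofReal (Real.exp 1) * ∫⁻ x, I ‖x‖ ∂M :=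
            lintegral_const_mul' _ _ ENNReal.ofReal_ne_top
    exact ne_top_of_le_ne_top (ENNReal.mul_ne_top ENNReal.ofReal_ne_top h) hle
  · intro h
    have hK : (2 * C + 2 : ℝ≥0∞) ≠ ⊤ :=
      ENNReal.add_ne_top.2 ⟨ENNReal.mul_ne_top (by norm_num) C_ne_top, by norm_num⟩
    have hpt : ∀ x : H, I ‖x‖ ≤ (2 * C + 2) * ENNReal.ofReal (min 1 (‖x‖ ^ 2))
        + Set.indicator {x : H | 1 < ‖x‖} (fun x => ENNReal.ofReal (Real.log ‖x‖)) x := by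
      intro x
      by_cases hx : 1 < ‖x‖
      · have hx' : x ∈ {x : H | 1 < ‖x‖} := hx
        rw [Set.indicator_of_mem hx', min_eq_left (by nlinarith), ENNReal.ofReal_one, mul_one]
        calc I ‖x‖ ≤ 2 + ENNReal.ofReal (Real.log ‖x‖) := I_le_big hx
          _ ≤ (2 * C + 2) + ENNReal.ofReal (Real.log ‖x‖) := by gcongr; exact le_add_self
      · have hx' : x ∉ {x : H | 1 < ‖x‖} := hx
        rw [Set.indicator_of_notMem hx', add_zero,
          min_eq_right (by nlinarith [norm_nonneg x, not_lt.mp hx])]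
        calc I ‖x‖ ≤ 2 * C * ENNReal.ofReal (‖x‖ ^ 2) :=
              I_le_small (norm_nonneg x) (not_lt.mp hx)
          _ ≤ (2 * C + 2) * ENNReal.ofReal (‖x‖ ^ 2) := by gcongr; exact le_self_add
    have hle : (∫⁻ x, I ‖x‖ ∂M)
        ≤ (2 * C + 2) * (∫⁻ x, ENNReal.ofReal (min 1 (‖x‖ ^ 2)) ∂M)
          + ∫⁻ x in {x : H | 1 < ‖x‖}, ENNReal.ofReal (Real.log ‖x‖) ∂M := by
      calc (∫⁻ x, I ‖x‖ ∂M)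
          ≤ ∫⁻ x, ((2 * C + 2) * ENNReal.ofReal (min 1 (‖x‖ ^ 2))
            + Set.indicator {x : H | 1 < ‖x‖}
              (fun x => ENNReal.ofReal (Real.log ‖x‖)) x) ∂M := lintegral_mono hpt
        _ = (∫⁻ x, (2 * C + 2) * ENNReal.ofReal (min 1 (‖x‖ ^ 2)) ∂M)
            + ∫⁻ x, Set.indicator {x : H | 1 < ‖x‖}
              (fun x => ENNReal.ofReal (Real.log ‖x‖)) x ∂M :=
            lintegral_add_left (((measurable_const.min
              (measurable_norm.pow_const 2)).ennreal_ofReal).const_mul _) _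
        _ = (2 * C + 2) * (∫⁻ x, ENNReal.ofReal (min 1 (‖x‖ ^ 2)) ∂M)
            + ∫⁻ x in {x : H | 1 < ‖x‖}, ENNReal.ofReal (Real.log ‖x‖) ∂M := by
            rw [lintegral_const_mul' _ _ hK, lintegral_indicator hS]
    exact ne_top_of_le_ne_top
      (ENNReal.add_ne_top.2 ⟨ENNReal.mul_ne_top hK hLevy, h⟩) hle
end

section
/- Let h : (a,b] → ℝ be measurable, r monotone on (a,b], and M a measure on a Banach space E\{0\}. Suppose both ∫_{(a,b]}(1∧h(t)²)|dr(t)| and the functional y ↦ ∫ (1 ∧ ⟨y,x⟩²) dM'(x) are finite for the transformed measure M'(A) := ∫_{(a,b]} ∫ 1_A(h(t)x) dM(x) |dr(t)|, for some y ∈ E' with ∫(1∧⟨y,x⟩²)dM(x) > 0. Then (∫_{(a,b]}(1∧h(t)²)|dr(t)|) · (∫(1∧⟨y,x⟩²)dM(x)) ≤ ∫(1∧⟨y,u⟩²) dM'(u). In particular, if M' is a Lévy measure and M ≠ 0 then ∫_{(a,b]}(1∧h(t)²)|dr(t)| < ∞. -/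
open MeasureTheory

lemma min_one_mul_le (s t : ℝ) (hs : 0 ≤ s) (ht : 0 ≤ t) :
    min 1 s * min 1 t ≤ min 1 (s * t) := by
  refine le_min ?_ (mul_le_mul (min_le_right _ _) (min_le_right _ _) (le_min zero_le_one ht) hs)
  calc min 1 s * min 1 t ≤ 1 * 1 :=
        mul_le_mul (min_le_left _ _) (min_le_left _ _) (le_min zero_le_one ht) zero_le_one
    _ = 1 := one_mul 1

/-- Corollary 3: comparison of `(1∧s)(1∧t) ≤ 1∧(st)` type integrals for the transformed Lévy
measure `M'(A) = ∫∫ 1_A(h(t)x) dM |dr|`; in particular if `M'` is a Lévy measure and `M ≠ 0`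
then `∫ (1 ∧ h²) |dr| < ∞`. -/
theorem stmt12 {E : Type*} [NormedAddCommGroup E] [NormedSpace ℝ E]
    [MeasurableSpace E] [BorelSpace E]
    (M : Measure E) (a b : ℝ) (h : ℝ → ℝ) (hmeas : Measurable h)
    (ρ : Measure ℝ) -- the measure `|dr|` induced by the monotone time change r
    (y : E →L[ℝ] ℝ) :
    (∫⁻ t in Set.Ioc a b, ENNReal.ofReal (min 1 (h t ^ 2)) ∂ρ)
        * (∫⁻ x, ENNReal.ofReal (min 1 (y x ^ 2)) ∂M)
      ≤ (∫⁻ t in Set.Ioc a b, ∫⁻ x, ENNReal.ofReal (min 1 (y (h t • x) ^ 2)) ∂M ∂ρ) ∧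
    ((∫⁻ t in Set.Ioc a b, ∫⁻ x, ENNReal.ofReal (min 1 (y (h t • x) ^ 2)) ∂M ∂ρ) ≠ ⊤ →
      (∫⁻ x, ENNReal.ofReal (min 1 (y x ^ 2)) ∂M) ≠ 0 →
      (∫⁻ t in Set.Ioc a b, ENNReal.ofReal (min 1 (h t ^ 2)) ∂ρ) ≠ ⊤) := by
  have key : ∀ t, ENNReal.ofReal (min 1 (h t ^ 2))
      * (∫⁻ x, ENNReal.ofReal (min 1 (y x ^ 2)) ∂M)
      ≤ ∫⁻ x, ENNReal.ofReal (min 1 (y (h t • x) ^ 2)) ∂M := by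
    intro t
    rw [← lintegral_const_mul' _ _ ENNReal.ofReal_ne_top]
    refine lintegral_mono fun x => ?_
    rw [← ENNReal.ofReal_mul (le_min zero_le_one (sq_nonneg _))]
    refine ENNReal.ofReal_le_ofReal ?_
    have hy : y (h t • x) ^ 2 = h t ^ 2 * y x ^ 2 := by
      rw [y.map_smul, smul_eq_mul, mul_pow]
    rw [hy]
    exact min_one_mul_le _ _ (sq_nonneg _) (sq_nonneg _)
  have hle : (∫⁻ t in Set.Ioc a b, ENNReal.ofReal (min 1 (h t ^ 2)) ∂ρ)
      * (∫⁻ x, ENNReal.ofReal (min 1 (y x ^ 2)) ∂M)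
      ≤ ∫⁻ t in Set.Ioc a b, ∫⁻ x, ENNReal.ofReal (min 1 (y (h t • x) ^ 2)) ∂M ∂ρ := by
    rw [← lintegral_mul_const _ (by fun_prop)]
    exact lintegral_mono fun t => key t
  refine ⟨hle, fun hfin hne => ?_⟩
  by_contra hA
  rw [hA, ENNReal.top_mul hne, top_le_iff] at hle
  exact hfin hle
end

section
/- Let ρ and ρ' be measures on (0,∞) and h, h' measurable, such that the pushforward (h⊗h')(ρ×ρ') equals (hρ) − (h'ρ') as measures (where hρ denotes the pushforward of ρ under h), with (hρ) − (h'ρ') ≥ 0. Then for every measurable Φ integrable against hρ: ∫∫ Φ(h(t)h'(s)y) dρ'(s) dρ(t) + ∫ Φ(h'(s)y) dρ'(s) = ∫ Φ(h(t)y) dρ(t), for every y. -/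
open MeasureTheory

/-- Proposition 8 (analytic core): under the measure identity
`(h ⊗ h')(ρ × ρ') = hρ - h'ρ' ≥ 0` (stated additively as
`(h ⊗ h')(ρ × ρ') + h'ρ' = hρ`), the composed transform plus the second transform
of `Φ` recovers the first transform. -/
theorem stmt19 (ρ ρ' : Measure ℝ) [SigmaFinite ρ] [SigmaFinite ρ']
    (hρ : ρ (Set.Iic 0) = 0) (hρ' : ρ' (Set.Iic 0) = 0)
    (h h' : ℝ → ℝ) (hmeas : Measurable h) (hmeas' : Measurable h')
    (hfact : Measure.map (fun p : ℝ × ℝ => h p.1 * h' p.2) (ρ.prod ρ')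
        + Measure.map h' ρ' = Measure.map h ρ)
    (Φ : ℝ → ℂ) (hΦ : Measurable Φ) (y : ℝ)
    (hint : Integrable (fun x => Φ (x * y)) (Measure.map h ρ)) :
    (∫ t, ∫ s, Φ (h t * h' s * y) ∂ρ' ∂ρ) + (∫ s, Φ (h' s * y) ∂ρ')
      = ∫ t, Φ (h t * y) ∂ρ := by
  have hg : Measurable fun p : ℝ × ℝ => h p.1 * h' p.2 :=
    (hmeas.comp measurable_fst).mul (hmeas'.comp measurable_snd)
  have hΦy : Measurable fun x : ℝ => Φ (x * y) := hΦ.comp (measurable_id.mul_const y)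
  have hint' : Integrable (fun x => Φ (x * y))
      (Measure.map (fun p : ℝ × ℝ => h p.1 * h' p.2) (ρ.prod ρ') + Measure.map h' ρ') := by
    rw [hfact]; exact hint
  have h1 : Integrable (fun x => Φ (x * y))
      (Measure.map (fun p : ℝ × ℝ => h p.1 * h' p.2) (ρ.prod ρ')) :=
    hint'.left_of_add_measure
  have h2 : Integrable (fun x => Φ (x * y)) (Measure.map h' ρ') :=
    hint'.right_of_add_measure
  have key : (∫ x, Φ (x * y) ∂(Measure.map (fun p : ℝ × ℝ => h p.1 * h' p.2) (ρ.prod ρ')))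
      + (∫ x, Φ (x * y) ∂(Measure.map h' ρ')) = ∫ x, Φ (x * y) ∂(Measure.map h ρ) := by
    rw [← integral_add_measure h1 h2, hfact]
  rw [integral_map hg.aemeasurable hΦy.aestronglyMeasurable,
    integral_map hmeas'.aemeasurable hΦy.aestronglyMeasurable,
    integral_map hmeas.aemeasurable hΦy.aestronglyMeasurable] at key
  have hprod : Integrable (fun p : ℝ × ℝ => Φ (h p.1 * h' p.2 * y)) (ρ.prod ρ') :=
    (integrable_map_measure hΦy.aestronglyMeasurable hg.aemeasurable).mp h1
  rw [← key, MeasureTheory.integral_prod _ hprod]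
end
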